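/- Let s be real, n ∈ ℕ, and define F(ζ) = Φ(−ζ²; 1/2, 1, s) = ∑_{r=0}^∞ (−1)^r ζ^{2r} / (r + 1/2)^s for |ζ| < 1, so that F(ζ) = 2^s Ti_s(ζ)/ζ where Ti_s is the generalized inverse tangent integral. Then for every complex ζ with |ζ| < 1, the n-th derivative of F at ζ equals (−1)^n · n! · ∑_{r=0}^{⌊n/2⌋} (−1)^r (2ζ)^{n−2r} / ((n−2r)! · r!) · (n−r)! · Φ(−ζ²; n−r+1/2, 1+n−r, s). -/

import Mathlib

/-- The generalised Lerch transcendent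
`Φ(ζ; α, β, s) = ∑_{r=0}^∞ (β)_r ζ^r / ((r+α)^s r!)` where `(β)_r = Γ(β+r)/Γ(β)`. -/
noncomputable def genLerch (ζ : ℂ) (α β s : ℝ) : ℂ :=
  ∑' r : ℕ,
    (((Real.Gamma (β + (r : ℝ)) / Real.Gamma β) /
      (((r : ℝ) + α) ^ s * (r.factorial : ℝ)) : ℝ) : ℂ) * ζ ^ r

/-- `F(ζ) = Φ(-ζ²; 1/2, 1, s) = ∑_{r=0}^∞ (-1)^r ζ^{2r} / (r+1/2)^s = 2^s Ti_s(ζ)/ζ`. -/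
noncomputable def tiFun (s : ℝ) (ζ : ℂ) : ℂ :=
  ∑' r : ℕ, (-1) ^ r * ζ ^ (2 * r) / ((((r : ℝ) + 1 / 2) ^ s : ℝ) : ℂ)



open Finset

/-- coefficient of the auxiliary series -/
noncomputable def coefT (s : ℝ) (m k : ℕ) : ℂ :=
  (-1) ^ (k + m) * ((k + m).factorial : ℂ) / (k.factorial : ℂ) /
    ((((k : ℝ) + (m : ℝ) + 1 / 2) ^ s : ℝ) : ℂ)

/-- auxiliary function: `(-1)^m m! Φ(-ζ²; m+1/2, 1+m, s)` as a series -/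
noncomputable def TT (s : ℝ) (m : ℕ) (ζ : ℂ) : ℂ := ∑' k : ℕ, coefT s m k * ζ ^ (2 * k)

lemma TT_zero (s : ℝ) (ζ : ℂ) : TT s 0 ζ = tiFun s ζ := by
  unfold TT tiFun coefT
  refine tsum_congr fun k => ?_
  have h : ((k : ℝ) + (0 : ℕ) + 1 / 2) = ((k : ℝ) + 1 / 2) := by push_cast; ring
  rw [h]
  have hk : (k.factorial : ℂ) ≠ 0 := by exact_mod_cast k.factorial_ne_zero
  field_simp
  simp only [add_zero]
  ring

lemma TT_eq_genLerch (s : ℝ) (m : ℕ) (ζ : ℂ) :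
    TT s m ζ = (-1) ^ m * (m.factorial : ℂ) *
      genLerch (-ζ ^ 2) ((m : ℝ) + 1 / 2) (1 + (m : ℝ)) s := by
  unfold TT genLerch coefT
  rw [← tsum_mul_left]
  refine tsum_congr fun k => ?_
  have h1 : Real.Gamma (1 + (m : ℝ) + (k : ℝ)) = ((m + k).factorial : ℝ) := by
    have : (1 : ℝ) + (m : ℝ) + (k : ℝ) = ((m + k : ℕ) : ℝ) + 1 := by push_cast; ring
    rw [this, Real.Gamma_nat_eq_factorial]
  have h2 : Real.Gamma (1 + (m : ℝ)) = (m.factorial : ℝ) := by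
    have : (1 : ℝ) + (m : ℝ) = ((m : ℕ) : ℝ) + 1 := by push_cast; ring
    rw [this, Real.Gamma_nat_eq_factorial]
  rw [h1, h2]
  have h3 : (-ζ ^ 2) ^ k = (-1) ^ k * ζ ^ (2 * k) := by
    rw [neg_pow, ← pow_mul]
  rw [h3]
  have h4 : ((k : ℝ) + ((m : ℝ) + 1 / 2)) = ((k : ℝ) + (m : ℝ) + 1 / 2) := by ring
  rw [h4]
  have hm : (m.factorial : ℂ) ≠ 0 := by exact_mod_cast m.factorial_ne_zero
  have hk : (k.factorial : ℂ) ≠ 0 := by exact_mod_cast k.factorial_ne_zero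
  have hr : ((((k : ℝ) + (m : ℝ) + 1 / 2) ^ s : ℝ) : ℂ) ≠ 0 := by
    simp only [ne_eq, Complex.ofReal_eq_zero]
    exact (Real.rpow_pos_of_pos (by positivity) s).ne'
  have hmk : ((m + k).factorial : ℂ) = ((k + m).factorial : ℂ) := by rw [Nat.add_comm]
  push_cast
  rw [hmk]
  push_cast
  field_simp
  have hR : ((((((k:ℝ) + (m:ℝ)) * 2 + 1) / 2) ^ s : ℝ) : ℂ) ≠ 0 :=
    Complex.ofReal_ne_zero.mpr (Real.rpow_pos_of_pos (by positivity) s).ne'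
  ring


lemma fact_add_le (k m : ℕ) : (k + m).factorial ≤ k.factorial * (k + m) ^ m := by
  induction m with
  | zero => simp
  | succ m ih =>
      have h1 : (k + (m + 1)).factorial = (k + m + 1) * (k + m).factorial := by
        rw [show k + (m + 1) = (k + m) + 1 by omega, Nat.factorial_succ]
      rw [h1]
      calc (k + m + 1) * (k + m).factorial ≤ (k + m + 1) * (k.factorial * (k + m) ^ m) :=
            Nat.mul_le_mul_left _ ih
        _ ≤ (k + m + 1) * (k.factorial * (k + m + 1) ^ m) := by
            exact Nat.mul_le_mul_left _ (Nat.mul_le_mul_left _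
              (Nat.pow_le_pow_left (Nat.le_succ _) m))
        _ = k.factorial * (k + (m + 1)) ^ (m + 1) := by ring_nf

lemma coefT_norm_le (s : ℝ) (m : ℕ) :
    ∃ C : ℝ, 0 ≤ C ∧ ∃ D : ℕ, ∀ k : ℕ, ‖coefT s m k‖ ≤ C * ((k : ℝ) + 1) ^ D := by
  set d : ℕ := ⌈|s|⌉₊ with hd
  refine ⟨((m : ℝ) + 1) ^ m * (2 * ((m : ℝ) + 1)) ^ d, by positivity, m + d, fun k => ?_⟩
  have hx : (0 : ℝ) < (k : ℝ) + (m : ℝ) + 1 / 2 := by positivity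
  have hnorm : ‖coefT s m k‖ =
      ((k + m).factorial : ℝ) / (k.factorial : ℝ) / (((k : ℝ) + (m : ℝ) + 1 / 2) ^ s) := by
    unfold coefT
    rw [norm_div, norm_div, norm_mul, norm_pow, norm_neg, norm_one, one_pow, one_mul,
      Complex.norm_natCast, Complex.norm_natCast, Complex.norm_real, Real.norm_eq_abs,
      abs_of_pos (Real.rpow_pos_of_pos hx s)]
  rw [hnorm]
  set y : ℝ := 2 * ((m : ℝ) + 1) * ((k : ℝ) + 1) with hy
  have hy1 : (1 : ℝ) ≤ y := by
    have h1 : (0:ℝ) ≤ (m:ℝ) := Nat.cast_nonneg m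
    have h2 : (0:ℝ) ≤ (k:ℝ) := Nat.cast_nonneg k
    nlinarith
  have hy0 : (0 : ℝ) ≤ y := by linarith
  -- factorial part
  have hf : ((k + m).factorial : ℝ) / (k.factorial : ℝ) ≤ (((m : ℝ) + 1) * ((k : ℝ) + 1)) ^ m := by
    rw [div_le_iff₀ (by positivity)]
    calc ((k + m).factorial : ℝ) ≤ (k.factorial : ℝ) * ((k : ℝ) + (m : ℝ)) ^ m := by
          exact_mod_cast fact_add_le k m
      _ ≤ (k.factorial : ℝ) * (((m : ℝ) + 1) * ((k : ℝ) + 1)) ^ m := by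
          have hbase : (k:ℝ) + (m:ℝ) ≤ ((m:ℝ)+1) * ((k:ℝ)+1) := by
            nlinarith [Nat.cast_nonneg (α := ℝ) k, Nat.cast_nonneg (α := ℝ) m,
              mul_nonneg (Nat.cast_nonneg (α := ℝ) m) (Nat.cast_nonneg (α := ℝ) k)]
          exact mul_le_mul_of_nonneg_left (pow_le_pow_left₀ (by positivity) hbase m)
            (by positivity)
      _ = (((m : ℝ) + 1) * ((k : ℝ) + 1)) ^ m * (k.factorial : ℝ) := mul_comm _ _
  -- rpow part
  have hr : (((k : ℝ) + (m : ℝ) + 1 / 2) ^ s)⁻¹ ≤ (2 * ((m : ℝ) + 1)) ^ d * ((k : ℝ) + 1) ^ d := by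
    have hstep : (((k : ℝ) + (m : ℝ) + 1 / 2) ^ s)⁻¹ ≤ y ^ |s| := by
      rw [← Real.rpow_neg hx.le]
      rcases le_or_gt s 0 with hs | hs
      · have : |s| = -s := abs_of_nonpos hs
        rw [this]
        refine Real.rpow_le_rpow hx.le ?_ (by linarith)
        nlinarith [Nat.cast_nonneg (α := ℝ) k, Nat.cast_nonneg (α := ℝ) m,
          mul_nonneg (Nat.cast_nonneg (α := ℝ) m) (Nat.cast_nonneg (α := ℝ) k)]
      · rw [abs_of_pos hs]
        have hinv : ((k : ℝ) + (m : ℝ) + 1 / 2)⁻¹ ≤ y := by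
          have h2 : ((k : ℝ) + (m : ℝ) + 1 / 2)⁻¹ ≤ 2 := by
            rw [inv_le_comm₀ hx (by norm_num)]
            nlinarith [Nat.cast_nonneg (α := ℝ) k, Nat.cast_nonneg (α := ℝ) m]
          calc ((k : ℝ) + (m : ℝ) + 1 / 2)⁻¹ ≤ 2 := h2
            _ ≤ y := by nlinarith [Nat.cast_nonneg (α := ℝ) k, Nat.cast_nonneg (α := ℝ) m,
                mul_nonneg (Nat.cast_nonneg (α := ℝ) m) (Nat.cast_nonneg (α := ℝ) k)]
        have hxe : ((k : ℝ) + (m : ℝ) + 1 / 2) ^ (-s) = (((k : ℝ) + (m : ℝ) + 1 / 2)⁻¹) ^ s := by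
          rw [Real.rpow_neg hx.le, ← Real.inv_rpow hx.le]
        rw [hxe]
        exact Real.rpow_le_rpow (by positivity) hinv hs.le
    have hstep2 : y ^ |s| ≤ y ^ (d : ℝ) :=
      Real.rpow_le_rpow_of_exponent_le hy1 (Nat.le_ceil _)
    have : y ^ (d : ℝ) = y ^ d := Real.rpow_natCast y d
    rw [this] at hstep2
    calc (((k : ℝ) + (m : ℝ) + 1 / 2) ^ s)⁻¹ ≤ y ^ d := le_trans hstep hstep2
      _ = (2 * ((m : ℝ) + 1)) ^ d * ((k : ℝ) + 1) ^ d := by rw [hy, mul_pow]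
  calc ((k + m).factorial : ℝ) / (k.factorial : ℝ) / (((k : ℝ) + (m : ℝ) + 1 / 2) ^ s)
      = ((k + m).factorial : ℝ) / (k.factorial : ℝ) * (((k : ℝ) + (m : ℝ) + 1 / 2) ^ s)⁻¹ := by
        rw [div_eq_mul_inv]
    _ ≤ (((m : ℝ) + 1) * ((k : ℝ) + 1)) ^ m * ((2 * ((m : ℝ) + 1)) ^ d * ((k : ℝ) + 1) ^ d) := by
        refine mul_le_mul hf hr (by positivity) (by positivity)
    _ = ((m : ℝ) + 1) ^ m * (2 * ((m : ℝ) + 1)) ^ d * ((k : ℝ) + 1) ^ (m + d) := by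
        rw [mul_pow, pow_add]; ring

lemma summable_aux (E : ℕ) {q : ℝ} (h0 : 0 ≤ q) (hq : q < 1) :
    Summable (fun k : ℕ => ((k : ℝ) + 1) ^ E * q ^ k) := by
  rcases eq_or_lt_of_le h0 with h | h
  · refine summable_of_ne_finset_zero (s := {0}) fun k hk => ?_
    have hk0 : k ≠ 0 := by simpa using hk
    rw [← h, zero_pow hk0, mul_zero]
  · have hs : Summable (fun n : ℕ => (n : ℝ) ^ E * q ^ n) :=
      summable_pow_mul_geometric_of_norm_lt_one E (by rwa [Real.norm_eq_abs, abs_of_pos h])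
    have hs2 : Summable (fun k : ℕ => ((k + 1 : ℕ) : ℝ) ^ E * q ^ (k + 1)) :=
      hs.comp_injective (add_left_injective 1)
    have hs3 := hs2.mul_left q⁻¹
    refine hs3.congr fun k => ?_
    push_cast
    field_simp
    ring

lemma summable_u (s : ℝ) (m : ℕ) {ρ : ℝ} (h0 : 0 < ρ) (h1 : ρ < 1) :
    Summable (fun k : ℕ => ‖coefT s m k‖ * (2 * (k : ℝ) + 2) * ρ ^ (2 * k) / ρ) := by
  obtain ⟨C, hC, D, hb⟩ := coefT_norm_le s m
  have hq0 : (0 : ℝ) ≤ ρ ^ 2 := sq_nonneg ρ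
  have hq1 : ρ ^ 2 < 1 := by nlinarith
  have hmaj : Summable (fun k : ℕ => 2 * C / ρ * (((k : ℝ) + 1) ^ (D + 1) * (ρ ^ 2) ^ k)) :=
    (summable_aux (D + 1) hq0 hq1).mul_left _
  refine Summable.of_nonneg_of_le (fun k => by positivity) (fun k => ?_) hmaj
  have h2 : ρ ^ (2 * k) = (ρ ^ 2) ^ k := by rw [← pow_mul]
  rw [h2]
  have h3 : ‖coefT s m k‖ * (2 * (k : ℝ) + 2) ≤ 2 * C * ((k : ℝ) + 1) ^ (D + 1) := by
    have := hb k
    have hk1 : (0:ℝ) < (k:ℝ) + 1 := by positivity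
    calc ‖coefT s m k‖ * (2 * (k : ℝ) + 2) ≤ (C * ((k : ℝ) + 1) ^ D) * (2 * ((k : ℝ) + 1)) := by
          refine mul_le_mul this (by ring_nf; rfl) (by positivity)
            (by positivity)
      _ = 2 * C * ((k : ℝ) + 1) ^ (D + 1) := by rw [pow_succ]; ring
  have h4 : 2 * C / ρ * (((k : ℝ) + 1) ^ (D + 1) * (ρ ^ 2) ^ k) =
      2 * C * ((k : ℝ) + 1) ^ (D + 1) * (ρ ^ 2) ^ k / ρ := by ring
  rw [h4, div_le_div_iff_of_pos_right h0]
  exact mul_le_mul_of_nonneg_right h3 (by positivity)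

lemma coefT_succ (s : ℝ) (m k : ℕ) :
    coefT s m (k + 1) * ((k : ℂ) + 1) = coefT s (m + 1) k := by
  unfold coefT
  have h1 : k + 1 + m = k + (m + 1) := by omega
  have h2 : ((k + 1 : ℕ) : ℝ) + (m : ℝ) + 1 / 2 = (k : ℝ) + ((m + 1 : ℕ) : ℝ) + 1 / 2 := by
    push_cast; ring
  rw [h1, h2]
  have h3 : ((k + 1).factorial : ℂ) = ((k : ℂ) + 1) * (k.factorial : ℂ) := by
    rw [Nat.factorial_succ]; push_cast; ring
  rw [h3]
  have hk : (k.factorial : ℂ) ≠ 0 := by exact_mod_cast k.factorial_ne_zero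
  have hk1 : (k : ℂ) + 1 ≠ 0 := by
    exact_mod_cast (Nat.cast_ne_zero (R := ℂ)).mpr (Nat.succ_ne_zero k)
  have hR : ((((k : ℝ) + ((m + 1 : ℕ) : ℝ) + 1 / 2) ^ s : ℝ) : ℂ) ≠ 0 :=
    Complex.ofReal_ne_zero.mpr (Real.rpow_pos_of_pos (by positivity) s).ne'
  have key : ∀ A b c R : ℂ, b ≠ 0 → c ≠ 0 → R ≠ 0 →
      A * (c * b) / (c * b) / R * c = A * (c * b) / b / R := by
    intro A b c R hb hc hR
    field_simp
  have h4 : (-1 : ℂ) ^ (k + (m + 1)) * ((k + (m + 1)).factorial : ℂ) =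
      ((-1 : ℂ) ^ (k + (m + 1)) * ((k + (m + 1)).factorial : ℂ) / (((k : ℂ) + 1) * (k.factorial : ℂ))) *
        (((k : ℂ) + 1) * (k.factorial : ℂ)) := by
    field_simp
  rw [h4]
  rw [key _ _ _ _ hk hk1 hR]

lemma hasDerivAt_TT (s : ℝ) (m : ℕ) {ζ : ℂ} (hζ : ‖ζ‖ < 1) :
    HasDerivAt (TT s m) (2 * ζ * TT s (m + 1) ζ) ζ := by
  set ρ : ℝ := (1 + ‖ζ‖) / 2 with hρ
  have h0 : 0 < ρ := by positivity
  have h1 : ρ < 1 := by rw [hρ]; linarith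
  have hζρ : ‖ζ‖ < ρ := by rw [hρ]; linarith
  set u : ℕ → ℝ := fun k => ‖coefT s m k‖ * (2 * (k : ℝ) + 2) * ρ ^ (2 * k) / ρ with hu_def
  have hu : Summable u := summable_u s m h0 h1
  set g : ℕ → ℂ → ℂ := fun k z => coefT s m k * z ^ (2 * k) with hg_def
  set g' : ℕ → ℂ → ℂ := fun k z => coefT s m k * ((2 * k : ℕ) * z ^ (2 * k - 1)) with hg'_def
  have hder : ∀ k z, HasDerivAt (g k) (g' k z) z := fun k z =>
    (hasDerivAt_pow (2 * k) z).const_mul (coefT s m k)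
  have hbound : ∀ k z, z ∈ Metric.ball (0 : ℂ) ρ → ‖g' k z‖ ≤ u k := by
    intro k z hz
    have hzρ : ‖z‖ < ρ := by simpa using hz
    have hz0 : (0 : ℝ) ≤ ‖z‖ := norm_nonneg z
    rw [hg'_def, hu_def]
    simp only [norm_mul, Complex.norm_natCast, norm_pow]
    rcases Nat.eq_zero_or_pos k with rfl | hk
    · simp; positivity
    · have hexp : ρ ^ (2 * k - 1) = ρ ^ (2 * k) / ρ := by
        rw [eq_div_iff h0.ne', ← pow_succ]
        congr 1
        omega
      calc ‖coefT s m k‖ * ((2 * k : ℕ) * ‖z‖ ^ (2 * k - 1))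
          ≤ ‖coefT s m k‖ * ((2 * (k : ℝ) + 2) * ρ ^ (2 * k - 1)) := by
            refine mul_le_mul_of_nonneg_left ?_ (norm_nonneg _)
            refine mul_le_mul (by push_cast; linarith)
              (pow_le_pow_left₀ hz0 hzρ.le _) (by positivity) (by positivity)
        _ = ‖coefT s m k‖ * (2 * (k : ℝ) + 2) * ρ ^ (2 * k) / ρ := by
            rw [hexp]; ring
  have hg0 : Summable fun k => g k 0 := by
    refine summable_of_ne_finset_zero (s := {0}) fun k hk => ?_
    have hk0 : k ≠ 0 := by simpa using hk
    simp [hg_def, zero_pow (by omega : 2 * k ≠ 0)]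
  have hmem : ζ ∈ Metric.ball (0 : ℂ) ρ := by simpa using hζρ
  have hmem0 : (0 : ℂ) ∈ Metric.ball (0 : ℂ) ρ := by simpa using h0
  have hder_tsum : HasDerivAt (fun z => ∑' k, g k z) (∑' k, g' k ζ) ζ :=
    hasDerivAt_tsum_of_isPreconnected hu Metric.isOpen_ball
      (convex_ball (0 : ℂ) ρ).isPreconnected (fun k z hz => hder k z) hbound hmem0 hg0 hmem
  have hsum' : Summable fun k => g' k ζ :=
    Summable.of_norm_bounded hu fun k => hbound k ζ hmem
  have key : (∑' k, g' k ζ) = 2 * ζ * TT s (m + 1) ζ := by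
    rw [hsum'.tsum_eq_zero_add]
    have hzero : g' 0 ζ = 0 := by simp [hg'_def]
    rw [hzero, zero_add]
    have hterm : ∀ k : ℕ, g' (k + 1) ζ = 2 * ζ * (coefT s (m + 1) k * ζ ^ (2 * k)) := by
      intro k
      show coefT s m (k + 1) * (((2 * (k + 1) : ℕ) : ℂ) * ζ ^ (2 * (k + 1) - 1)) =
        2 * ζ * (coefT s (m + 1) k * ζ ^ (2 * k))
      have he : 2 * (k + 1) - 1 = 2 * k + 1 := by omega
      rw [he]
      have := coefT_succ s m k
      push_cast
      rw [pow_succ]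
      linear_combination (2 * ζ ^ (2 * k) * ζ) * this
    calc (∑' k, g' (k + 1) ζ) = ∑' k, 2 * ζ * (coefT s (m + 1) k * ζ ^ (2 * k)) :=
        tsum_congr hterm
      _ = 2 * ζ * TT s (m + 1) ζ := by rw [tsum_mul_left]; rfl
  rw [← key]
  exact hder_tsum


/-- binomial-type coefficient `n!/(r!(n-2r)!)` (zero if `2r > n`) -/
noncomputable def cc (n r : ℕ) : ℂ :=
  if 2 * r ≤ n then (n.factorial : ℂ) / ((r.factorial : ℂ) * ((n - 2 * r).factorial : ℂ)) else 0

lemma cc_zero (n : ℕ) : cc n 0 = 1 := by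
  simp [cc, Nat.factorial_ne_zero]

lemma cc_big {n r : ℕ} (h : n < 2 * r) : cc n r = 0 := by
  simp [cc, Nat.not_le.mpr h]

lemma fact_cast_ne (t : ℕ) : ((t.factorial : ℂ)) ≠ 0 := by
  exact_mod_cast t.factorial_ne_zero

lemma cc_rec (n r : ℕ) :
    cc (n + 1) (r + 1) = cc n (r + 1) + 2 * ((n - 2 * r : ℕ) : ℂ) * cc n r := by
  rcases le_or_gt (2 * (r + 1)) n with h1 | h1
  · obtain ⟨j, hj⟩ : ∃ j, n - 2 * r = j + 2 := ⟨n - 2 * r - 2, by omega⟩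
    have e1 : n + 1 - 2 * (r + 1) = j + 1 := by omega
    have e2 : n - 2 * (r + 1) = j := by omega
    rw [cc, cc, cc, if_pos (show 2 * (r + 1) ≤ n + 1 by omega), if_pos h1,
      if_pos (show 2 * r ≤ n by omega), e1, e2, hj]
    rw [← mul_div_assoc]
    have hD2 : ((r + 1).factorial : ℂ) * ((j).factorial : ℂ) ≠ 0 :=
      mul_ne_zero (fact_cast_ne _) (fact_cast_ne _)
    have hD3 : ((r).factorial : ℂ) * (((j + 2)).factorial : ℂ) ≠ 0 :=
      mul_ne_zero (fact_cast_ne _) (fact_cast_ne _)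
    have hD1 : ((r + 1).factorial : ℂ) * (((j + 1)).factorial : ℂ) ≠ 0 :=
      mul_ne_zero (fact_cast_ne _) (fact_cast_ne _)
    rw [div_add_div _ _ hD2 hD3, div_eq_div_iff hD1 (mul_ne_zero hD2 hD3)]
    have f1 : ((n + 1).factorial : ℂ) = ((n : ℂ) + 1) * (n.factorial : ℂ) := by
      rw [Nat.factorial_succ]; push_cast; ring
    have f2 : ((r + 1).factorial : ℂ) = ((r : ℂ) + 1) * (r.factorial : ℂ) := by
      rw [Nat.factorial_succ]; push_cast; ring
    have f3 : ((j + 1).factorial : ℂ) = ((j : ℂ) + 1) * (j.factorial : ℂ) := by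
      rw [Nat.factorial_succ]; push_cast; ring
    have f4 : ((j + 2).factorial : ℂ) = ((j : ℂ) + 2) * (((j : ℂ) + 1) * (j.factorial : ℂ)) := by
      rw [show j + 2 = (j + 1) + 1 by omega, Nat.factorial_succ, Nat.factorial_succ]
      push_cast; ring
    have hn : (n : ℂ) = (j : ℂ) + 2 * (r : ℂ) + 2 := by
      have hh : n = j + 2 * r + 2 := by omega
      rw [hh]; push_cast; ring
    rw [f1, f2, f3, f4, hn]
    push_cast
    ring
  · rcases eq_or_lt_of_le (by omega : n + 1 ≤ 2 * (r + 1)) with h2 | h2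
    · -- n = 2r + 1
      have hn : n = 2 * r + 1 := by omega
      subst hn
      rw [cc_big (show 2 * r + 1 < 2 * (r + 1) by omega), cc, cc,
        if_pos (show 2 * (r + 1) ≤ 2 * r + 1 + 1 by omega),
        if_pos (show 2 * r ≤ 2 * r + 1 by omega),
        show 2 * r + 1 + 1 - 2 * (r + 1) = 0 from by omega,
        show 2 * r + 1 - 2 * r = 1 from by omega]
    
      simp only [Nat.factorial_zero, Nat.factorial_one, Nat.cast_one, mul_one, zero_add]
      have f1 : ((2 * r + 1 + 1).factorial : ℂ) =
          (2 * ((r : ℂ) + 1)) * ((2 * r + 1).factorial : ℂ) := by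
        rw [Nat.factorial_succ]; push_cast; ring
      have f2 : ((r + 1).factorial : ℂ) = ((r : ℂ) + 1) * (r.factorial : ℂ) := by
        rw [Nat.factorial_succ]; push_cast; ring
      have hr1 : ((r : ℂ) + 1) ≠ 0 := Nat.cast_add_one_ne_zero r
      rw [f1, f2, ← mul_div_assoc,
        div_eq_div_iff (mul_ne_zero hr1 (fact_cast_ne _)) (fact_cast_ne r)]
      ring
    · -- n ≤ 2r
      have e0 : n - 2 * r = 0 := by omega
      rw [cc_big (by omega), cc_big (by omega), e0]
      push_cast
      ring

/-- the Hermite-type partial sum -/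
noncomputable def PP (s : ℝ) (n : ℕ) (ζ : ℂ) : ℂ :=
  ∑ r ∈ Finset.range (n + 1), cc n r * (2 * ζ) ^ (n - 2 * r) * TT s (n - r) ζ

noncomputable def AA (s : ℝ) (n : ℕ) (ζ : ℂ) (i : ℕ) : ℂ :=
  cc n i * (((n - 2 * i : ℕ) : ℂ) * (2 * ζ) ^ (n - 2 * i - 1) * 2) * TT s (n - i) ζ

noncomputable def BB (s : ℝ) (n : ℕ) (ζ : ℂ) (r : ℕ) : ℂ :=
  cc n r * (2 * ζ) ^ (n - 2 * r) * (2 * ζ * TT s (n - r + 1) ζ)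

noncomputable def B2 (s : ℝ) (n : ℕ) (ζ : ℂ) (i : ℕ) : ℂ :=
  cc n (i + 1) * (2 * ζ) ^ (n + 1 - 2 * (i + 1)) * TT s (n - i) ζ

lemma sumD_eq (s : ℝ) (n : ℕ) (ζ : ℂ) :
    (∑ r ∈ Finset.range (n + 1), (AA s n ζ r + BB s n ζ r)) = PP s (n + 1) ζ := by
  have hPP : PP s (n + 1) ζ =
      (∑ i ∈ Finset.range (n + 1),
        cc (n + 1) (i + 1) * (2 * ζ) ^ (n + 1 - 2 * (i + 1)) * TT s (n + 1 - (i + 1)) ζ) +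
        cc (n + 1) 0 * (2 * ζ) ^ (n + 1 - 2 * 0) * TT s (n + 1 - 0) ζ :=
    Finset.sum_range_succ' _ (n + 1)
  have hsplit : ∀ i : ℕ,
      cc (n + 1) (i + 1) * (2 * ζ) ^ (n + 1 - 2 * (i + 1)) * TT s (n + 1 - (i + 1)) ζ =
        B2 s n ζ i + AA s n ζ i := by
    intro i
    have hidx : n + 1 - (i + 1) = n - i := by omega
    have hexp : n + 1 - 2 * (i + 1) = n - 2 * i - 1 := by omega
    rw [hidx, cc_rec, B2, AA, hexp]
    ring
  have hB2B : ∀ i ∈ Finset.range n, B2 s n ζ i = BB s n ζ (i + 1) := by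
    intro i hi
    have hin : i < n := Finset.mem_range.mp hi
    have hidx : n - (i + 1) + 1 = n - i := by omega
    rw [B2, BB, hidx]
    rcases le_or_gt (2 * (i + 1)) n with hc | hc
    · have hexp : n + 1 - 2 * (i + 1) = (n - 2 * (i + 1)) + 1 := by omega
      rw [hexp, pow_succ]
      ring
    · rw [cc_big hc]
      ring
  have hB2top : B2 s n ζ n = 0 := by
    rw [B2, cc_big (by omega : n < 2 * (n + 1))]
    ring
  have hB0 : cc (n + 1) 0 * (2 * ζ) ^ (n + 1 - 2 * 0) * TT s (n + 1 - 0) ζ = BB s n ζ 0 := by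
    rw [BB]
    simp only [Nat.mul_zero, Nat.sub_zero, cc_zero]
    rw [pow_succ]
    ring
  calc (∑ r ∈ Finset.range (n + 1), (AA s n ζ r + BB s n ζ r))
      = (∑ r ∈ Finset.range (n + 1), AA s n ζ r) + ∑ r ∈ Finset.range (n + 1), BB s n ζ r :=
        Finset.sum_add_distrib
    _ = (∑ r ∈ Finset.range (n + 1), AA s n ζ r) +
          ((∑ i ∈ Finset.range n, BB s n ζ (i + 1)) + BB s n ζ 0) := by
        rw [Finset.sum_range_succ' (BB s n ζ) n]
    _ = (∑ r ∈ Finset.range (n + 1), AA s n ζ r) +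
          ((∑ i ∈ Finset.range n, B2 s n ζ i) + BB s n ζ 0) := by
        rw [Finset.sum_congr rfl hB2B]
    _ = (∑ i ∈ Finset.range (n + 1), (B2 s n ζ i + AA s n ζ i)) + BB s n ζ 0 := by
        rw [Finset.sum_add_distrib, Finset.sum_range_succ (B2 s n ζ) n, hB2top, add_zero]
        ring
    _ = PP s (n + 1) ζ := by
        rw [hPP, Finset.sum_congr rfl (fun i _ => (hsplit i).symm), hB0]

lemma hasDerivAt_PP (s : ℝ) (n : ℕ) {ζ : ℂ} (hζ : ‖ζ‖ < 1) :
    HasDerivAt (PP s n) (PP s (n + 1) ζ) ζ := by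
  have hterm : ∀ r ∈ Finset.range (n + 1),
      HasDerivAt (fun z => cc n r * (2 * z) ^ (n - 2 * r) * TT s (n - r) z)
        (AA s n ζ r + BB s n ζ r) ζ := by
    intro r _
    have h2 : HasDerivAt (fun z : ℂ => 2 * z) (2 : ℂ) ζ := by
      simpa using (hasDerivAt_id ζ).const_mul (2 : ℂ)
    have h1 : HasDerivAt (fun z : ℂ => (2 * z) ^ (n - 2 * r))
        (((n - 2 * r : ℕ) : ℂ) * (2 * ζ) ^ (n - 2 * r - 1) * 2) ζ := by
      have := (hasDerivAt_pow (n - 2 * r) (2 * ζ)).comp ζ h2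
      simpa [Function.comp_def] using this
    have := (h1.const_mul (cc n r)).mul (hasDerivAt_TT s (n - r) hζ)
    rw [AA, BB]
    exact this
  have hsum := HasDerivAt.fun_sum hterm
  rw [sumD_eq s n ζ] at hsum
  exact hsum

lemma iteratedDeriv_tiFun_eq (s : ℝ) :
    ∀ n : ℕ, ∀ ζ : ℂ, ‖ζ‖ < 1 → iteratedDeriv n (tiFun s) ζ = PP s n ζ := by
  intro n
  induction n with
  | zero =>
      intro ζ hζ
      rw [iteratedDeriv_zero]
      unfold PP
      rw [Finset.sum_range_one, cc_zero, TT_zero]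
      norm_num
  | succ n ih =>
      intro ζ hζ
      rw [iteratedDeriv_succ]
      have hmem : ζ ∈ Metric.ball (0 : ℂ) 1 := by
        simp [Metric.mem_ball, Complex.dist_eq]
        exact hζ
      have hEq : iteratedDeriv n (tiFun s) =ᶠ[nhds ζ] PP s n := by
        filter_upwards [Metric.isOpen_ball.mem_nhds hmem] with z hz
        refine ih z ?_
        simpa [Metric.mem_ball, Complex.dist_eq] using hz
      rw [hEq.deriv_eq]
      exact (hasDerivAt_PP s n hζ).deriv


/-- For `|ζ| < 1`, the `n`-th derivative of `F(ζ) = 2^s Ti_s(ζ)/ζ`: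
`∂ⁿ_ζ F(ζ) = (-1)^n n! ∑_{r=0}^{⌊n/2⌋} (-1)^r (2ζ)^{n-2r}/((n-2r)! r!) (n-r)!
  Φ(-ζ²; n-r+1/2, 1+n-r, s)`. -/
theorem tiFun_iteratedDeriv (s : ℝ) (n : ℕ) (ζ : ℂ) (hζ : ‖ζ‖ < 1) :
    iteratedDeriv n (tiFun s) ζ =
      (-1) ^ n * (n.factorial : ℂ) *
        ∑ r ∈ Finset.range (n / 2 + 1),
          (-1) ^ r * (2 * ζ) ^ (n - 2 * r) /
              (((n - 2 * r).factorial : ℂ) * (r.factorial : ℂ)) *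
            ((n - r).factorial : ℂ) *
            genLerch (-ζ ^ 2) (((n - r : ℕ) : ℝ) + 1 / 2) (1 + ((n - r : ℕ) : ℝ)) s := by
  rw [iteratedDeriv_tiFun_eq s n ζ hζ]
  unfold PP
  rw [← Finset.sum_subset (Finset.range_subset_range.mpr (show n / 2 + 1 ≤ n + 1 by omega))
    (fun x _ hx => by
      rw [cc_big (show n < 2 * x by
        have := Finset.mem_range.not.mp hx
        omega)]
      ring)]
  rw [Finset.mul_sum]
  refine Finset.sum_congr rfl fun r hr => ?_
  have h2r : 2 * r ≤ n := by
    have := Finset.mem_range.mp hr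
    omega
  rw [TT_eq_genLerch s (n - r) ζ, cc, if_pos h2r]
  have hsign : ((-1 : ℂ)) ^ (n - r) = (-1) ^ n * (-1) ^ r := by
    have h1 : ((-1 : ℂ)) ^ (n - r) * (-1) ^ r = (-1) ^ n := by
      rw [← pow_add]
      congr 1
      omega
    calc ((-1 : ℂ)) ^ (n - r) = ((-1 : ℂ)) ^ (n - r) * ((-1) ^ r * (-1) ^ r) := by
          rw [← pow_add, ← two_mul, pow_mul]
          norm_num
      _ = (-1) ^ n * (-1) ^ r := by rw [← mul_assoc, h1]
  rw [hsign]
  have hr0 : (r.factorial : ℂ) ≠ 0 := fact_cast_ne r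
  have hnr0 : ((n - 2 * r).factorial : ℂ) ≠ 0 := fact_cast_ne (n - 2 * r)
  field_simp
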